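/- arXiv:2402.02702 — 2 statements merged into one kernel-verified Lean document; each statement's English description precedes it below -/
import Mathlib

section
/- Unbiasedness of the uncentered influence function at the truth (content of Lemma 1): E[ H₁(μ₁₁, μ₁₀, m₀, τ) ] = α₁; equivalently, the influence function A₁ := H₁(μ₁₁, μ₁₀, m₀, τ) − κ·(1−S)·α₁ has mean zero. -/
open MeasureTheory

/-- `m` is a version of the conditional expectation `E[Z ∣ X; B]`. -/
def IsVersion {Ω E : Type*} [MeasurableSpace Ω] [MeasurableSpace E]
    (P : Measure Ω) (X : Ω → E) (Z : Ω → ℝ) (B : Set Ω) (m : E → ℝ) : Prop :=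
  Measurable m ∧
    ∀ h : E → ℝ, Measurable h → (∃ C, ∀ x, |h x| ≤ C) →
      ∫ ω in B, Z ω * h (X ω) ∂P = ∫ ω in B, m (X ω) * h (X ω) ∂P

/-- Conditional mean `E[Z ∣ B]` of a real random variable given an event `B`. -/
noncomputable def condMean {Ω : Type*} [MeasurableSpace Ω]
    (P : Measure Ω) (Z : Ω → ℝ) (B : Set Ω) : ℝ :=
  (∫ ω in B, Z ω ∂P) / (P B).toReal

/-- The norm `‖f‖ = (E[f(X)²])^{1/2}`. -/
noncomputable def normX {Ω E : Type*} [MeasurableSpace Ω]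
    (P : Measure Ω) (X : Ω → E) (f : E → ℝ) : ℝ :=
  Real.sqrt (∫ ω, (f (X ω)) ^ 2 ∂P)

/-- Admissible nuisance candidates for Scenario 1. -/
def Admissible1 {Ω E : Type*} [MeasurableSpace Ω] [MeasurableSpace E]
    (P : Measure Ω) (X : Ω → E) (ε M : ℝ) (m11 m10 m00 t : E → ℝ) : Prop :=
  Measurable m11 ∧ Measurable m10 ∧ Measurable m00 ∧ Measurable t ∧
    ∀ᵐ ω ∂P, ε ≤ |m10 (X ω)| ∧ |m11 (X ω)| ≤ M ∧ |m10 (X ω)| ≤ M ∧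
      |m00 (X ω)| ≤ M ∧ 0 ≤ t (X ω) ∧ t (X ω) ≤ M

/-- The Scenario 1 uncentered estimating function `H₁`, with `κ = 1/P(S=0)`. -/
noncomputable def H1 {Ω E : Type*} [MeasurableSpace Ω]
    (P : Measure Ω) (X : Ω → E) (S A Y : Ω → ℝ) (q m11 m10 m00 t : E → ℝ) :
    Ω → ℝ := fun ω =>
  (P {ω' | S ω' = 0}).toReal⁻¹ *
    ((1 - S ω) * (m11 (X ω) / m10 (X ω)) * Y ω +
      S ω * t (X ω) * (m00 (X ω) / m10 (X ω)) *
        (A ω / q (X ω) * (Y ω - m11 (X ω)) -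
          (1 - A ω) / (1 - q (X ω)) * (m11 (X ω) / m10 (X ω)) * (Y ω - m10 (X ω))))

/-!
On the strata `{S = 0}`, `{S = 1, A = 1}` and `{S = 1, A = 0}` the estimating function `H₁` is `κ`
times, respectively, the plug-in term `(μ₁₁/μ₁₀)(X)·Y`, the residual `Y − μ₁₁(X)` times a bounded
function of `X`, and minus the residual `Y − μ₁₀(X)` times a bounded function of `X`. As `μ₁₁` and
`μ₁₀` are versions of the conditional means of `Y` on the last two strata, both residual terms
integrate to zero, which leaves `E[H₁] = κ·E[(μ₁₁/μ₁₀)(X)·Y; S = 0] = α₁`. The centring term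
`κ·(1 − S)·α₁` has mean `κ·P(S = 0)·α₁ = α₁`.
-/

open scoped ENNReal

section Version

variable {Ω E : Type*} [MeasurableSpace Ω] [MeasurableSpace E] {P : Measure Ω} {X : Ω → E}
  {Z : Ω → ℝ} {B : Set Ω} {m h : E → ℝ}

/-- Clipping `h` at an essential bound of `h ∘ X` yields an everywhere bounded test function
that agrees with `h` along `X` almost surely. -/
theorem IsVersion.setIntegral_mul_eq_of_memLp_top (hv : IsVersion P X Z B m) (hh : Measurable h)
    (hhX : MemLp (fun ω => h (X ω)) ∞ P) :
    ∫ ω in B, Z ω * h (X ω) ∂P = ∫ ω in B, m (X ω) * h (X ω) ∂P := by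
  obtain ⟨C, hC⟩ : ∃ C, ∀ᵐ ω ∂P, |h (X ω)| ≤ C := ⟨_, ae_le_lpNorm_exponent_top hhX⟩
  set h' : E → ℝ := fun x => max (-C) (min C (h x))
  have h'_bdd : ∀ x, |h' x| ≤ |C| := fun x => abs_le.2
    ⟨(neg_le_neg (le_abs_self C)).trans (le_max_left _ _),
      max_le (neg_le_abs C) ((min_le_left _ _).trans (le_abs_self C))⟩
  have h'_eq : ∀ᵐ ω ∂P.restrict B, h' (X ω) = h (X ω) := by
    filter_upwards [ae_restrict_of_ae hC] with ω hω
    obtain ⟨hlo, hhi⟩ := abs_le.1 hω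
    simp only [h', min_eq_right hhi, max_eq_right hlo]
  calc ∫ ω in B, Z ω * h (X ω) ∂P = ∫ ω in B, Z ω * h' (X ω) ∂P :=
        integral_congr_ae (h'_eq.mono fun ω hω => by simp only [hω])
    _ = ∫ ω in B, m (X ω) * h' (X ω) ∂P :=
        hv.2 h' (measurable_const.max (measurable_const.min hh)) ⟨|C|, h'_bdd⟩
    _ = ∫ ω in B, m (X ω) * h (X ω) ∂P :=
        integral_congr_ae (h'_eq.mono fun ω hω => by simp only [hω])

theorem IsVersion.setIntegral_sub_mul_eq_zero (hv : IsVersion P X Z B m)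
    (hZ : IntegrableOn Z B P) (hm : IntegrableOn (fun ω => m (X ω)) B P) (hh : Measurable h)
    (hhX : MemLp (fun ω => h (X ω)) ∞ P) :
    ∫ ω in B, (Z ω - m (X ω)) * h (X ω) ∂P = 0 := by
  have hZh : IntegrableOn (fun ω => Z ω * h (X ω)) B P := hZ.mul_of_top_left (hhX.restrict B)
  have hmh : IntegrableOn (fun ω => m (X ω) * h (X ω)) B P := hm.mul_of_top_left (hhX.restrict B)
  simp_rw [sub_mul]
  rw [integral_sub hZh hmh, hv.setIntegral_mul_eq_of_memLp_top hh hhX, sub_self]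

end Version

section ZeroOne

variable {Ω : Type*} {S : Ω → ℝ}

theorem one_sub_eq_indicator_one (hS01 : ∀ ω, S ω = 0 ∨ S ω = 1) :
    (fun ω => 1 - S ω) = {ω | S ω = 0}.indicator 1 := by
  ext ω
  rcases hS01 ω with hS | hS <;> simp [hS]

variable [MeasurableSpace Ω] {P : Measure Ω}

theorem integrable_one_sub_of_zero_or_one [IsFiniteMeasure P] (hS : Measurable S)
    (hS01 : ∀ ω, S ω = 0 ∨ S ω = 1) : Integrable (fun ω => 1 - S ω) P := by
  rw [one_sub_eq_indicator_one hS01]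
  exact (integrable_const 1).indicator (hS (measurableSet_singleton 0))

theorem integral_one_sub_of_zero_or_one (hS : Measurable S) (hS01 : ∀ ω, S ω = 0 ∨ S ω = 1) :
    ∫ ω, (1 - S ω) ∂P = P.real {ω | S ω = 0} := by
  rw [one_sub_eq_indicator_one hS01]
  exact integral_indicator_one (hS (measurableSet_singleton 0))

end ZeroOne

section H1

variable {Ω E : Type*} [MeasurableSpace Ω] {P : Measure Ω} {X : Ω → E} {S A Y : Ω → ℝ}
  {q m11 m10 m00 t : E → ℝ}

noncomputable def H1.treatedWeight (q m10 m00 t : E → ℝ) (x : E) : ℝ :=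
  t x * (m00 x / m10 x) / q x

noncomputable def H1.controlWeight (q m11 m10 m00 t : E → ℝ) (x : E) : ℝ :=
  t x * (m00 x / m10 x) * (m11 x / m10 x) / (1 - q x)

open H1

theorem H1_eq_indicator {ω : Ω} (hS : S ω = 0 ∨ S ω = 1) (hA : A ω = 0 ∨ A ω = 1) :
    H1 P X S A Y q m11 m10 m00 t ω = (P {ω' | S ω' = 0}).toReal⁻¹ *
      ({ω | S ω = 0}.indicator (fun ω => m11 (X ω) / m10 (X ω) * Y ω) +
        {ω | S ω = 1 ∧ A ω = 1}.indicator
          (fun ω => (Y ω - m11 (X ω)) * treatedWeight q m10 m00 t (X ω)) -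
        {ω | S ω = 1 ∧ A ω = 0}.indicator
          (fun ω => (Y ω - m10 (X ω)) * controlWeight q m11 m10 m00 t (X ω))) ω := by
  rcases hS with hS | hS <;> rcases hA with hA | hA <;>
    simp only [H1, treatedWeight, controlWeight, Pi.add_apply, Pi.sub_apply, Set.indicator_apply,
      Set.mem_ofPred_eq, hS, hA, zero_ne_one, one_ne_zero, and_false, false_and, and_self,
      ↓reduceIte] <;>
    ring

section Bounds

variable {ε M : ℝ} {x : E}

theorem abs_treatedWeight_le (hε : 0 < ε) (ht : |t x| ≤ M) (h00 : |m00 x| ≤ M)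
    (h10 : ε ≤ |m10 x|) (hq : ε ≤ q x) :
    |treatedWeight q m10 m00 t x| ≤ M * (M / ε) / ε := by
  have hM : 0 ≤ M := (abs_nonneg _).trans ht
  rw [treatedWeight, abs_div, abs_mul, abs_div, abs_of_pos (hε.trans_le hq)]
  gcongr

theorem abs_controlWeight_le (hε : 0 < ε) (ht : |t x| ≤ M) (h00 : |m00 x| ≤ M)
    (h11 : |m11 x| ≤ M) (h10 : ε ≤ |m10 x|) (hq : q x ≤ 1 - ε) :
    |controlWeight q m11 m10 m00 t x| ≤ M * (M / ε) * (M / ε) / ε := by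
  have hM : 0 ≤ M := (abs_nonneg _).trans ht
  rw [controlWeight, abs_div, abs_mul, abs_mul, abs_div, abs_div,
    abs_of_pos (show 0 < 1 - q x by linarith)]
  gcongr
  linarith

end Bounds

variable [MeasurableSpace E]

structure H1.IntegrableTerms (P : Measure Ω) (X : Ω → E) (Y : Ω → ℝ) (q m11 m10 m00 t : E → ℝ) :
    Prop where
  integrable_outcome : Integrable Y P
  integrable_m11 : Integrable (fun ω => m11 (X ω)) P
  integrable_m10 : Integrable (fun ω => m10 (X ω)) P
  integrable_plugIn : Integrable (fun ω => m11 (X ω) / m10 (X ω) * Y ω) P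
  measurable_treatedWeight : Measurable (treatedWeight q m10 m00 t)
  memLp_treatedWeight : MemLp (fun ω => treatedWeight q m10 m00 t (X ω)) ∞ P
  measurable_controlWeight : Measurable (controlWeight q m11 m10 m00 t)
  memLp_controlWeight : MemLp (fun ω => controlWeight q m11 m10 m00 t (X ω)) ∞ P

theorem H1.IntegrableTerms.of_ae_bounds [IsFiniteMeasure P] {ε M : ℝ} (hX : Measurable X)
    (hY : Measurable Y) (hq : Measurable q) (h11 : Measurable m11) (h10 : Measurable m10)
    (h00 : Measurable m00) (ht : Measurable t) (hε : 0 < ε)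
    (hbd : ∀ᵐ ω ∂P, ε ≤ q (X ω) ∧ q (X ω) ≤ 1 - ε ∧ ε ≤ |m10 (X ω)| ∧ |m11 (X ω)| ≤ M ∧
      |m10 (X ω)| ≤ M ∧ |m00 (X ω)| ≤ M ∧ |t (X ω)| ≤ M ∧ |Y ω| ≤ M) :
    IntegrableTerms P X Y q m11 m10 m00 t := by
  simp only [Filter.eventually_and] at hbd
  obtain ⟨hq0, hq1, h10ε, h11M, h10M, h00M, htM, hYM⟩ := hbd
  have hw1 : Measurable (treatedWeight q m10 m00 t) := (ht.mul (h00.div h10)).div hq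
  have hw0 : Measurable (controlWeight q m11 m10 m00 t) :=
    ((ht.mul (h00.div h10)).mul (h11.div h10)).div (measurable_const.sub hq)
  refine ⟨.of_bound hY.aestronglyMeasurable M hYM,
    .of_bound (h11.comp hX).aestronglyMeasurable M h11M,
    .of_bound (h10.comp hX).aestronglyMeasurable M h10M,
    .of_bound (((h11.comp hX).div (h10.comp hX)).mul hY).aestronglyMeasurable (M / ε * M) ?_,
    hw1, memLp_top_of_bound (hw1.comp hX).aestronglyMeasurable (M * (M / ε) / ε) ?_,
    hw0, memLp_top_of_bound (hw0.comp hX).aestronglyMeasurable (M * (M / ε) * (M / ε) / ε) ?_⟩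
  · filter_upwards [h11M, h10ε, hYM] with ω h11ω h10ω hYω
    have hM : 0 ≤ M := (abs_nonneg _).trans hYω
    rw [Real.norm_eq_abs, abs_mul, abs_div]
    gcongr
  · filter_upwards [htM, h00M, h10ε, hq0] with ω htω h00ω h10ω hqω
    exact abs_treatedWeight_le hε htω h00ω h10ω hqω
  · filter_upwards [htM, h00M, h11M, h10ε, hq1] with ω htω h00ω h11ω h10ω hqω
    exact abs_controlWeight_le hε htω h00ω h11ω h10ω hqω

theorem H1.IntegrableTerms.integrable_treatedResidual (h : IntegrableTerms P X Y q m11 m10 m00 t) :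
    Integrable (fun ω => (Y ω - m11 (X ω)) * treatedWeight q m10 m00 t (X ω)) P :=
  (h.integrable_outcome.sub h.integrable_m11).mul_of_top_left h.memLp_treatedWeight

theorem H1.IntegrableTerms.integrable_controlResidual (h : IntegrableTerms P X Y q m11 m10 m00 t) :
    Integrable (fun ω => (Y ω - m10 (X ω)) * controlWeight q m11 m10 m00 t (X ω)) P :=
  (h.integrable_outcome.sub h.integrable_m10).mul_of_top_left h.memLp_controlWeight

theorem integrable_H1 (hS : Measurable S) (hA : Measurable A)
    (hS01 : ∀ ω, S ω = 0 ∨ S ω = 1) (hA01 : ∀ ω, A ω = 0 ∨ A ω = 1)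
    (h : IntegrableTerms P X Y q m11 m10 m00 t) :
    Integrable (H1 P X S A Y q m11 m10 m00 t) P := by
  have hB0 : MeasurableSet {ω | S ω = 0} := hS (measurableSet_singleton 0)
  have hB11 : MeasurableSet {ω | S ω = 1 ∧ A ω = 1} :=
    (hS (measurableSet_singleton 1)).inter (hA (measurableSet_singleton 1))
  have hB10 : MeasurableSet {ω | S ω = 1 ∧ A ω = 0} :=
    (hS (measurableSet_singleton 1)).inter (hA (measurableSet_singleton 0))
  exact ((((h.integrable_plugIn.indicator hB0).add
    (h.integrable_treatedResidual.indicator hB11)).sub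
    (h.integrable_controlResidual.indicator hB10)).const_mul _).congr
    (ae_of_all _ fun ω => (H1_eq_indicator (hS01 ω) (hA01 ω)).symm)

theorem integral_H1 (hS : Measurable S) (hA : Measurable A)
    (hS01 : ∀ ω, S ω = 0 ∨ S ω = 1) (hA01 : ∀ ω, A ω = 0 ∨ A ω = 1)
    (hm11 : IsVersion P X Y {ω | S ω = 1 ∧ A ω = 1} m11)
    (hm10 : IsVersion P X Y {ω | S ω = 1 ∧ A ω = 0} m10)
    (h : IntegrableTerms P X Y q m11 m10 m00 t) :
    ∫ ω, H1 P X S A Y q m11 m10 m00 t ω ∂P = (P {ω | S ω = 0}).toReal⁻¹ *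
      ∫ ω in {ω | S ω = 0}, m11 (X ω) / m10 (X ω) * Y ω ∂P := by
  have hB0 : MeasurableSet {ω | S ω = 0} := hS (measurableSet_singleton 0)
  have hB11 : MeasurableSet {ω | S ω = 1 ∧ A ω = 1} :=
    (hS (measurableSet_singleton 1)).inter (hA (measurableSet_singleton 1))
  have hB10 : MeasurableSet {ω | S ω = 1 ∧ A ω = 0} :=
    (hS (measurableSet_singleton 1)).inter (hA (measurableSet_singleton 0))
  have hF := h.integrable_plugIn.indicator hB0
  have hG1 := h.integrable_treatedResidual.indicator hB11
  rw [integral_congr_ae (ae_of_all _ fun ω => H1_eq_indicator (hS01 ω) (hA01 ω)),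
    integral_const_mul, integral_sub' (hF.add hG1) (h.integrable_controlResidual.indicator hB10),
    integral_add' hF hG1, integral_indicator hB0, integral_indicator hB11,
    integral_indicator hB10,
    hm11.setIntegral_sub_mul_eq_zero h.integrable_outcome.integrableOn
      h.integrable_m11.integrableOn h.measurable_treatedWeight h.memLp_treatedWeight,
    hm10.setIntegral_sub_mul_eq_zero h.integrable_outcome.integrableOn
      h.integrable_m10.integrableOn h.measurable_controlWeight h.memLp_controlWeight,
    add_zero, sub_zero]

end H1

theorem H1_unbiased_at_truth_general
    {Ω E : Type*} [MeasurableSpace Ω] [MeasurableSpace E]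
    (P : Measure Ω) [IsProbabilityMeasure P]
    (X : Ω → E) (S A Y : Ω → ℝ)
    (hX : Measurable X) (hS : Measurable S) (hA : Measurable A) (hY : Measurable Y)
    (hS01 : ∀ ω, S ω = 0 ∨ S ω = 1) (hA01 : ∀ ω, A ω = 0 ∨ A ω = 1)
    (hPS0 : 0 < P {ω | S ω = 0})
    (μ11 μ10 m0 g q : E → ℝ)
    (hμ11 : IsVersion P X Y {ω | S ω = 1 ∧ A ω = 1} μ11)
    (hμ10 : IsVersion P X Y {ω | S ω = 1 ∧ A ω = 0} μ10)
    (hq : IsVersion P X A {ω | S ω = 1} q)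
    (ε M : ℝ) (hε0 : 0 < ε)
    (hbd : ∀ᵐ ω ∂P,
      ε ≤ g (X ω) ∧ g (X ω) ≤ 1 - ε ∧ ε ≤ q (X ω) ∧ q (X ω) ≤ 1 - ε ∧
      ε ≤ |μ10 (X ω)| ∧ |μ11 (X ω)| ≤ M ∧ |μ10 (X ω)| ≤ M ∧ |m0 (X ω)| ≤ M ∧
      |Y ω| ≤ M ∧ (1 - g (X ω)) / g (X ω) ≤ M)
    (htruth : Admissible1 P X ε M μ11 μ10 m0 (fun x => (1 - g x) / g x))
    :
    ∫ ω, H1 P X S A Y q μ11 μ10 m0 (fun x => (1 - g x) / g x) ω ∂P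
      = condMean P (fun ω => μ11 (X ω) / μ10 (X ω) * Y ω) {ω | S ω = 0} ∧
    ∫ ω, (H1 P X S A Y q μ11 μ10 m0 (fun x => (1 - g x) / g x) ω -
        (P {ω' | S ω' = 0}).toReal⁻¹ * (1 - S ω) *
          condMean P (fun ω' => μ11 (X ω') / μ10 (X ω') * Y ω') {ω' | S ω' = 0}) ∂P
      = 0 := by
  obtain ⟨h11m, h10m, h00m, htm, htb⟩ := htruth
  have hterms : H1.IntegrableTerms P X Y q μ11 μ10 m0 (fun x => (1 - g x) / g x) := by
    refine .of_ae_bounds (M := M) hX hY hq.1 h11m h10m h00m htm hε0 ?_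
    filter_upwards [hbd, htb] with ω ⟨_, _, hq0, hq1, h10, h11, h10', h00, hYM, _⟩
      ⟨_, _, _, _, ht0, htM⟩
    exact ⟨hq0, hq1, h10, h11, h10', h00, abs_le.2 ⟨by linarith, htM⟩, hYM⟩
  have hmean : ∫ ω, H1 P X S A Y q μ11 μ10 m0 (fun x => (1 - g x) / g x) ω ∂P =
      condMean P (fun ω => μ11 (X ω) / μ10 (X ω) * Y ω) {ω | S ω = 0} := by
    rw [integral_H1 hS hA hS01 hA01 hμ11 hμ10 hterms, condMean, div_eq_inv_mul]
  refine ⟨hmean, ?_⟩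
  rw [integral_sub (integrable_H1 hS hA hS01 hA01 hterms)
      (((integrable_one_sub_of_zero_or_one hS hS01).const_mul _).mul_const _),
    integral_mul_const, integral_const_mul, integral_one_sub_of_zero_or_one hS hS01,
    measureReal_def, inv_mul_cancel₀ (ENNReal.toReal_ne_zero.2 ⟨hPS0.ne', measure_ne_top _ _⟩),
    one_mul, hmean, sub_self]

/-- Lemma 1 (unbiasedness at the truth): `E[H₁(μ₁₁, μ₁₀, m₀, τ)] = α₁`, equivalently
the influence function `A₁ = H₁(μ₁₁, μ₁₀, m₀, τ) − κ·(1−S)·α₁` has mean zero. -/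
theorem H1_unbiased_at_truth
    {Ω E : Type*} [MeasurableSpace Ω] [MeasurableSpace E]
    (P : Measure Ω) [IsProbabilityMeasure P]
    (X : Ω → E) (S A Y : Ω → ℝ)
    (hX : Measurable X) (hS : Measurable S) (hA : Measurable A) (hY : Measurable Y)
    (hS01 : ∀ ω, S ω = 0 ∨ S ω = 1) (hA01 : ∀ ω, A ω = 0 ∨ A ω = 1)
    (hPS0 : 0 < P {ω | S ω = 0})
    (hPS1A1 : 0 < P {ω | S ω = 1 ∧ A ω = 1})
    (hPS1A0 : 0 < P {ω | S ω = 1 ∧ A ω = 0})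
    (μ11 μ10 m0 g q : E → ℝ)
    (hμ11 : IsVersion P X Y {ω | S ω = 1 ∧ A ω = 1} μ11)
    (hμ10 : IsVersion P X Y {ω | S ω = 1 ∧ A ω = 0} μ10)
    (hm0 : IsVersion P X Y {ω | S ω = 0} m0)
    (hg : IsVersion P X S Set.univ g)
    (hq : IsVersion P X A {ω | S ω = 1} q)
    (ε M : ℝ) (hε0 : 0 < ε) (hε1 : ε < 1) (hM : 1 ≤ M)
    (hbd : ∀ᵐ ω ∂P,
      ε ≤ g (X ω) ∧ g (X ω) ≤ 1 - ε ∧ ε ≤ q (X ω) ∧ q (X ω) ≤ 1 - ε ∧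
      ε ≤ |μ10 (X ω)| ∧ |μ11 (X ω)| ≤ M ∧ |μ10 (X ω)| ≤ M ∧ |m0 (X ω)| ≤ M ∧
      |Y ω| ≤ M ∧ (1 - g (X ω)) / g (X ω) ≤ M)
    (htruth : Admissible1 P X ε M μ11 μ10 m0 (fun x => (1 - g x) / g x))
    :
    ∫ ω, H1 P X S A Y q μ11 μ10 m0 (fun x => (1 - g x) / g x) ω ∂P
      = condMean P (fun ω => μ11 (X ω) / μ10 (X ω) * Y ω) {ω | S ω = 0} ∧
    ∫ ω, (H1 P X S A Y q μ11 μ10 m0 (fun x => (1 - g x) / g x) ω -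
        (P {ω' | S ω' = 0}).toReal⁻¹ * (1 - S ω) *
          condMean P (fun ω' => μ11 (X ω') / μ10 (X ω') * Y ω') {ω' | S ω' = 0}) ∂P
      = 0 :=
  H1_unbiased_at_truth_general P X S A Y hX hS hA hY hS01 hA01 hPS0 μ11 μ10 m0 g q hμ11 hμ10 hq ε M
    hε0 hbd htruth
end

section
/- Alternative product-form bias bound (Section 2.4, alternative representation of R₁,ₙ): there is a constant C, depending only on ε, M and P(S=0), such that for all admissible nuisance candidates μ̃₁₁, μ̃₁₀, μ̃₀₀, τ̃: | E[ H₁(μ̃₁₁, μ̃₁₀, μ̃₀₀, τ̃) ] − α₁ | ≤ C · ( ‖μ̃₁₁ − μ₁₁‖ + ‖μ̃₁₀ − μ₁₀‖ ) · ( ‖ μ̃₀₀/μ̃₁₀ − m₀/μ₁₀ ‖ + ‖τ̃ − τ‖ ). -/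
/-!
Conditioning on `X`, the three terms of `H₁` have expectations `κ E[(1-g) m₀ μ̃₁₁/μ̃₁₀]`,
`κ E[g (μ₁₁ - μ̃₁₁) τ̃ μ̃₀₀/μ̃₁₀]` and `-κ E[g (μ₁₀ - μ̃₁₀) τ̃ (μ̃₀₀/μ̃₁₀)(μ̃₁₁/μ̃₁₀)]`
(the inverse weights `1/q`, `1/(1-q)` cancel against `q`), while `α₁ = κ E[(1-g) m₀ μ₁₁/μ₁₀]`.
Since `1 - g = g τ`, the bias is
`κ E[g (τ m₀/μ₁₀ - τ̃ μ̃₀₀/μ̃₁₀) ((μ̃₁₁ - μ₁₁) + (μ̃₁₁/μ̃₁₀)(μ₁₀ - μ̃₁₀))]`: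
each factor is bounded pointwise by `M/ε` times the sum of the corresponding nuisance errors,
and Cauchy–Schwarz turns the expectation of the product into the product of `L²` norms.
-/

open MeasureTheory

open scoped ENNReal

section Boundedness

variable {Ω E : Type*} [MeasurableSpace Ω] [MeasurableSpace E] {P : Measure Ω} {X : Ω → E}
  {D : Ω → ℝ} {ε M : ℝ}

theorem MeasureTheory.MemLp.top_mul {f h : Ω → ℝ} (hf : MemLp f ∞ P) (hh : MemLp h ∞ P) :
    MemLp (fun ω => f ω * h ω) ∞ P :=
  hh.mul' hf

theorem memLp_top_of_zero_or_one (hD : Measurable D) (hD01 : ∀ ω, D ω = 0 ∨ D ω = 1) :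
    MemLp D ∞ P :=
  memLp_top_of_bound hD.aestronglyMeasurable 1
    (ae_of_all _ fun ω => by rcases hD01 ω with h | h <;> simp [h])

theorem memLp_top_comp {φ : E → ℝ} (hφ : Measurable φ) (hX : Measurable X) {C : ℝ}
    (hC : ∀ᵐ ω ∂P, |φ (X ω)| ≤ C) : MemLp (fun ω => φ (X ω)) ∞ P :=
  memLp_top_of_bound (hφ.comp hX).aestronglyMeasurable C hC

theorem memLp_top_inv {G : Ω → ℝ} (hG : Measurable G) (hε : 0 < ε)
    (hGε : ∀ᵐ ω ∂P, ε ≤ |G ω|) : MemLp (fun ω => (G ω)⁻¹) ∞ P :=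
  memLp_top_of_bound hG.inv.aestronglyMeasurable ε⁻¹
    (hGε.mono fun ω h => by rw [norm_inv]; exact inv_anti₀ hε h)

theorem memLp_top_of_overlap {p : E → ℝ} (hp : Measurable p) (hX : Measurable X) (hε : 0 < ε)
    (hpε : ∀ᵐ ω ∂P, ε ≤ p (X ω) ∧ p (X ω) ≤ 1 - ε) :
    MemLp (fun ω => p (X ω)) ∞ P ∧ MemLp (fun ω => (p (X ω))⁻¹) ∞ P ∧
      MemLp (fun ω => (1 - p (X ω))⁻¹) ∞ P :=
  ⟨memLp_top_comp hp hX (C := 1)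
      (hpε.mono fun ω h => abs_le.2 ⟨by linarith [h.1], by linarith [h.2]⟩),
    memLp_top_inv (hp.comp hX) hε (hpε.mono fun ω h => h.1.trans (le_abs_self _)),
    memLp_top_inv ((measurable_const.sub hp).comp hX) hε
      (hpε.mono fun ω h => by rw [abs_of_pos (by linarith [h.2])]; linarith [h.2])⟩

theorem Admissible1.memLp_top {a b c t : E → ℝ} (h : Admissible1 P X ε M a b c t)
    (hX : Measurable X) (hε : 0 < ε) :
    MemLp (fun ω => a (X ω)) ∞ P ∧ MemLp (fun ω => b (X ω)) ∞ P ∧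
      MemLp (fun ω => c (X ω)) ∞ P ∧ MemLp (fun ω => t (X ω)) ∞ P ∧
      MemLp (fun ω => (b (X ω))⁻¹) ∞ P := by
  obtain ⟨ha, hb, hc, ht, hbd⟩ := h
  refine ⟨memLp_top_comp ha hX (hbd.mono fun ω h => h.2.1),
    memLp_top_comp hb hX (hbd.mono fun ω h => h.2.2.1),
    memLp_top_comp hc hX (hbd.mono fun ω h => h.2.2.2.1),
    memLp_top_comp ht hX (hbd.mono fun ω h => (abs_of_nonneg h.2.2.2.2.1).trans_le h.2.2.2.2.2),
    memLp_top_inv (hb.comp hX) hε (hbd.mono fun ω h => h.1)⟩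

end Boundedness

section Versions

variable {Ω E : Type*} [MeasurableSpace Ω] [MeasurableSpace E] {P : Measure Ω} {X : Ω → E}
  {Z Z' D : Ω → ℝ} {B : Set Ω} {m m' φ : E → ℝ}

theorem isVersion_comp (hm : Measurable m) : IsVersion P X (fun ω => m (X ω)) B m :=
  ⟨hm, fun _ _ _ => rfl⟩

theorem IsVersion.sub (hX : Measurable X) (hv : IsVersion P X Z B m)
    (hv' : IsVersion P X Z' B m') (hZ : IntegrableOn Z B P) (hZ' : IntegrableOn Z' B P)
    (hm : IntegrableOn (fun ω => m (X ω)) B P) (hm' : IntegrableOn (fun ω => m' (X ω)) B P) :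
    IsVersion P X (fun ω => Z ω - Z' ω) B (fun x => m x - m' x) := by
  refine ⟨hv.1.sub hv'.1, fun h hh hbdd => ?_⟩
  obtain ⟨C, hC⟩ := hbdd
  have mul_h {F : Ω → ℝ} (hF : IntegrableOn F B P) :
      IntegrableOn (fun ω => F ω * h (X ω)) B P :=
    hF.mul_bdd (hh.comp hX).aestronglyMeasurable (ae_of_all _ fun ω => hC (X ω))
  simp only [sub_mul]
  rw [integral_sub (mul_h hZ) (mul_h hZ'), integral_sub (mul_h hm) (mul_h hm'),
    hv.2 h hh ⟨C, hC⟩, hv'.2 h hh ⟨C, hC⟩]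

/-- Truncating an essentially bounded test function at its essential supremum changes it only on
a null set, so the defining identity of a version extends to such test functions. -/
theorem IsVersion.setIntegral_mul_eq (hv : IsVersion P X Z B m) (hφ : Measurable φ)
    (hφX : MemLp (fun ω => φ (X ω)) ∞ P) :
    ∫ ω in B, Z ω * φ (X ω) ∂P = ∫ ω in B, m (X ω) * φ (X ω) ∂P := by
  set C := lpNorm (fun ω => φ (X ω)) ∞ P
  set ψ : E → ℝ := fun x => if |φ x| ≤ C then φ x else 0
  have hψ : Measurable ψ :=
    Measurable.ite (measurableSet_le hφ.abs measurable_const) hφ measurable_const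
  have hψC : ∀ x, |ψ x| ≤ C := fun x => by
    by_cases h : |φ x| ≤ C
    · simp [ψ, h]
    · simp [ψ, h, C]
  have hψφ : ∀ᵐ ω ∂P.restrict B, ψ (X ω) = φ (X ω) :=
    ae_restrict_of_ae ((ae_le_lpNorm_exponent_top hφX).mono fun ω h => if_pos h)
  calc ∫ ω in B, Z ω * φ (X ω) ∂P = ∫ ω in B, Z ω * ψ (X ω) ∂P :=
        integral_congr_ae (hψφ.mono fun ω h => by simp only [h])
    _ = ∫ ω in B, m (X ω) * ψ (X ω) ∂P := hv.2 ψ hψ ⟨C, hψC⟩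
    _ = ∫ ω in B, m (X ω) * φ (X ω) ∂P := integral_congr_ae (hψφ.mono fun ω h => by simp only [h])

theorem IsVersion.integral_mul_eq (hv : IsVersion P X Z Set.univ m) (hφ : Measurable φ)
    (hφX : MemLp (fun ω => φ (X ω)) ∞ P) :
    ∫ ω, Z ω * φ (X ω) ∂P = ∫ ω, m (X ω) * φ (X ω) ∂P := by
  simpa only [setIntegral_univ] using hv.setIntegral_mul_eq hφ hφX

theorem integral_mul_eq_setIntegral_of_indicator {f : Ω → ℝ} (hB : MeasurableSet B)
    (hD : ∀ ω, D ω = B.indicator 1 ω) :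
    ∫ ω, D ω * f ω ∂P = ∫ ω in B, f ω ∂P := by
  rw [← integral_indicator hB]
  congr 1
  funext ω
  by_cases h : ω ∈ B <;> simp [hD, h]

theorem IsVersion.integral_indicator_mul_eq (hv : IsVersion P X Z B m) (hB : MeasurableSet B)
    (hD : ∀ ω, D ω = B.indicator 1 ω) (hφ : Measurable φ)
    (hφX : MemLp (fun ω => φ (X ω)) ∞ P) :
    ∫ ω, D ω * (Z ω * φ (X ω)) ∂P = ∫ ω, D ω * (m (X ω) * φ (X ω)) ∂P := by
  rw [integral_mul_eq_setIntegral_of_indicator hB hD,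
    integral_mul_eq_setIntegral_of_indicator hB hD, hv.setIntegral_mul_eq hφ hφX]

end Versions

section Tower

variable {Ω E : Type*} [MeasurableSpace Ω] [MeasurableSpace E] {P : Measure Ω} {X : Ω → E}
  {S A Y Z : Ω → ℝ} {μ11 μ10 m0 g q m μ a b χ φ φ₀ φ₁ φ₂ : E → ℝ}

theorem integral_S_mul_eq (hS : Measurable S) (hS01 : ∀ ω, S ω = 0 ∨ S ω = 1)
    (hg : IsVersion P X S Set.univ g) (hv : IsVersion P X Z {ω | S ω = 1} m)
    (hmX : MemLp (fun ω => m (X ω)) ∞ P) (hχ : Measurable χ)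
    (hχX : MemLp (fun ω => χ (X ω)) ∞ P) :
    ∫ ω, S ω * (Z ω * χ (X ω)) ∂P = ∫ ω, g (X ω) * (m (X ω) * χ (X ω)) ∂P := by
  rw [hv.integral_indicator_mul_eq (hS (measurableSet_singleton 1))
    (fun ω => by rcases hS01 ω with h | h <;> simp [h]) hχ hχX]
  exact hg.integral_mul_eq (φ := fun x => m x * χ x) (hv.1.mul hχ) (hmX.top_mul hχX)

theorem integral_one_sub_S_mul_eq [IsFiniteMeasure P] (hX : Measurable X) (hS : Measurable S)
    (hS01 : ∀ ω, S ω = 0 ∨ S ω = 1) (hg : IsVersion P X S Set.univ g)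
    (hgX : MemLp (fun ω => g (X ω)) ∞ P) (hm : IsVersion P X Y {ω | S ω = 0} m)
    (hmX : MemLp (fun ω => m (X ω)) ∞ P) (hφ : Measurable φ)
    (hφX : MemLp (fun ω => φ (X ω)) ∞ P) :
    ∫ ω, (1 - S ω) * (Y ω * φ (X ω)) ∂P = ∫ ω, (1 - g (X ω)) * (m (X ω) * φ (X ω)) ∂P := by
  rw [hm.integral_indicator_mul_eq (hS (measurableSet_singleton 0))
    (fun ω => by rcases hS01 ω with h | h <;> simp [h]) hφ hφX]
  have h1S : IsVersion P X (fun ω => 1 - S ω) Set.univ (fun x => 1 - g x) :=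
    (isVersion_comp measurable_const).sub hX hg (integrable_const _).integrableOn
      ((memLp_top_of_zero_or_one hS hS01).integrable le_top).integrableOn
      (integrable_const _).integrableOn (hgX.integrable le_top).integrableOn
  exact h1S.integral_mul_eq (φ := fun x => m x * φ x) (hm.1.mul hφ) (hmX.top_mul hφX)

theorem condMean_mul_eq [IsFiniteMeasure P] (hX : Measurable X) (hS : Measurable S)
    (hS01 : ∀ ω, S ω = 0 ∨ S ω = 1) (hg : IsVersion P X S Set.univ g)
    (hgX : MemLp (fun ω => g (X ω)) ∞ P) (hm0 : IsVersion P X Y {ω | S ω = 0} m0)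
    (hm0X : MemLp (fun ω => m0 (X ω)) ∞ P) (hφ : Measurable φ)
    (hφX : MemLp (fun ω => φ (X ω)) ∞ P) :
    condMean P (fun ω => φ (X ω) * Y ω) {ω | S ω = 0}
      = (P {ω | S ω = 0}).toReal⁻¹ * ∫ ω, (1 - g (X ω)) * (m0 (X ω) * φ (X ω)) ∂P := by
  rw [condMean, div_eq_inv_mul, ← integral_one_sub_S_mul_eq hX hS hS01 hg hgX hm0 hm0X hφ hφX,
    integral_mul_eq_setIntegral_of_indicator (f := fun ω => Y ω * φ (X ω))
      (hS (measurableSet_singleton 0)) (fun ω => by rcases hS01 ω with h | h <;> simp [h])]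
  simp only [mul_comm (Y _)]
  rfl

theorem integral_S_mul_mul_eq {W : Ω → ℝ} {B : Set Ω} {m' : E → ℝ} (hS : Measurable S)
    (hS01 : ∀ ω, S ω = 0 ∨ S ω = 1) (hg : IsVersion P X S Set.univ g)
    (hv' : IsVersion P X W {ω | S ω = 1} m') (hm'X : MemLp (fun ω => m' (X ω)) ∞ P)
    (hB : MeasurableSet B) (hSW : ∀ ω, S ω * W ω = B.indicator 1 ω) (hv : IsVersion P X Z B m)
    (hmX : MemLp (fun ω => m (X ω)) ∞ P) (hφ : Measurable φ)
    (hφX : MemLp (fun ω => φ (X ω)) ∞ P) :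
    ∫ ω, S ω * (W ω * (Z ω * φ (X ω))) ∂P
      = ∫ ω, g (X ω) * (m' (X ω) * (m (X ω) * φ (X ω))) ∂P := by
  have hweighted := hv.integral_indicator_mul_eq (D := fun ω => S ω * W ω) hB hSW hφ hφX
  simp only [mul_assoc] at hweighted
  rw [hweighted]
  exact integral_S_mul_eq hS hS01 hg hv' hm'X (hv.1.mul hφ) (hmX.top_mul hφX)

theorem integral_S_mul_A_mul_eq [IsFiniteMeasure P] (hX : Measurable X) (hS : Measurable S)
    (hS01 : ∀ ω, S ω = 0 ∨ S ω = 1) (hA : Measurable A) (hA01 : ∀ ω, A ω = 0 ∨ A ω = 1)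
    (hg : IsVersion P X S Set.univ g) (hq : IsVersion P X A {ω | S ω = 1} q)
    (hqX : MemLp (fun ω => q (X ω)) ∞ P) (hμ : IsVersion P X Y {ω | S ω = 1 ∧ A ω = 1} μ)
    (hYI : Integrable Y P) (hμX : MemLp (fun ω => μ (X ω)) ∞ P) (ha : Measurable a)
    (haX : MemLp (fun ω => a (X ω)) ∞ P) (hφ : Measurable φ)
    (hφX : MemLp (fun ω => φ (X ω)) ∞ P) :
    ∫ ω, S ω * (A ω * ((Y ω - a (X ω)) * φ (X ω))) ∂P
      = ∫ ω, g (X ω) * (q (X ω) * ((μ (X ω) - a (X ω)) * φ (X ω))) ∂P :=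
  integral_S_mul_mul_eq hS hS01 hg hq hqX
    ((hS (measurableSet_singleton 1)).inter (hA (measurableSet_singleton 1)))
    (fun ω => by rcases hS01 ω with h | h <;> rcases hA01 ω with h' | h' <;> simp [h, h'])
    (hμ.sub hX (isVersion_comp ha) hYI.integrableOn (haX.integrable le_top).integrableOn
      (hμX.integrable le_top).integrableOn (haX.integrable le_top).integrableOn)
    (hμX.sub haX) hφ hφX

theorem integral_S_mul_one_sub_A_mul_eq [IsFiniteMeasure P] (hX : Measurable X)
    (hS : Measurable S) (hS01 : ∀ ω, S ω = 0 ∨ S ω = 1) (hA : Measurable A)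
    (hA01 : ∀ ω, A ω = 0 ∨ A ω = 1) (hg : IsVersion P X S Set.univ g)
    (hq : IsVersion P X A {ω | S ω = 1} q) (hqX : MemLp (fun ω => q (X ω)) ∞ P)
    (hμ : IsVersion P X Y {ω | S ω = 1 ∧ A ω = 0} μ) (hYI : Integrable Y P)
    (hμX : MemLp (fun ω => μ (X ω)) ∞ P) (ha : Measurable a)
    (haX : MemLp (fun ω => a (X ω)) ∞ P) (hφ : Measurable φ)
    (hφX : MemLp (fun ω => φ (X ω)) ∞ P) :
    ∫ ω, S ω * ((1 - A ω) * ((Y ω - a (X ω)) * φ (X ω))) ∂P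
      = ∫ ω, g (X ω) * ((1 - q (X ω)) * ((μ (X ω) - a (X ω)) * φ (X ω))) ∂P :=
  integral_S_mul_mul_eq hS hS01 hg
    ((isVersion_comp measurable_const).sub hX hq (integrable_const _).integrableOn
      ((memLp_top_of_zero_or_one hA hA01).integrable le_top).integrableOn
      (integrable_const _).integrableOn (hqX.integrable le_top).integrableOn)
    ((memLp_const 1).sub hqX)
    ((hS (measurableSet_singleton 1)).inter (hA (measurableSet_singleton 0)))
    (fun ω => by rcases hS01 ω with h | h <;> rcases hA01 ω with h' | h' <;> simp [h, h'])
    (hμ.sub hX (isVersion_comp ha) hYI.integrableOn (haX.integrable le_top).integrableOn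
      (hμX.integrable le_top).integrableOn (haX.integrable le_top).integrableOn)
    (hμX.sub haX) hφ hφX

theorem integral_projection_eq [IsFiniteMeasure P] (hX : Measurable X) (hS : Measurable S)
    (hS01 : ∀ ω, S ω = 0 ∨ S ω = 1) (hA : Measurable A) (hA01 : ∀ ω, A ω = 0 ∨ A ω = 1)
    (hμ11 : IsVersion P X Y {ω | S ω = 1 ∧ A ω = 1} μ11)
    (hμ10 : IsVersion P X Y {ω | S ω = 1 ∧ A ω = 0} μ10)
    (hm0 : IsVersion P X Y {ω | S ω = 0} m0) (hg : IsVersion P X S Set.univ g)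
    (hq : IsVersion P X A {ω | S ω = 1} q) (hYX : MemLp Y ∞ P)
    (hμ11X : MemLp (fun ω => μ11 (X ω)) ∞ P) (hμ10X : MemLp (fun ω => μ10 (X ω)) ∞ P)
    (hm0X : MemLp (fun ω => m0 (X ω)) ∞ P) (hgX : MemLp (fun ω => g (X ω)) ∞ P)
    (hqX : MemLp (fun ω => q (X ω)) ∞ P) (ha : Measurable a)
    (haX : MemLp (fun ω => a (X ω)) ∞ P) (hb : Measurable b)
    (hbX : MemLp (fun ω => b (X ω)) ∞ P) (hφ₀ : Measurable φ₀)
    (hφ₀X : MemLp (fun ω => φ₀ (X ω)) ∞ P) (hφ₁ : Measurable φ₁)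
    (hφ₁X : MemLp (fun ω => φ₁ (X ω)) ∞ P) (hφ₂ : Measurable φ₂)
    (hφ₂X : MemLp (fun ω => φ₂ (X ω)) ∞ P) :
    ∫ ω, ((1 - S ω) * (Y ω * φ₀ (X ω)) + S ω * (A ω * ((Y ω - a (X ω)) * φ₁ (X ω)))
        - S ω * ((1 - A ω) * ((Y ω - b (X ω)) * φ₂ (X ω)))) ∂P
      = ∫ ω, (1 - g (X ω)) * (m0 (X ω) * φ₀ (X ω)) ∂P
        + ∫ ω, g (X ω) * (q (X ω) * ((μ11 (X ω) - a (X ω)) * φ₁ (X ω))) ∂P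
        - ∫ ω, g (X ω) * ((1 - q (X ω)) * ((μ10 (X ω) - b (X ω)) * φ₂ (X ω))) ∂P := by
  have hSX := memLp_top_of_zero_or_one (P := P) hS hS01
  have hAX := memLp_top_of_zero_or_one (P := P) hA hA01
  have hYI := hYX.integrable le_top
  rw [integral_sub, integral_add,
    integral_one_sub_S_mul_eq hX hS hS01 hg hgX hm0 hm0X hφ₀ hφ₀X,
    integral_S_mul_A_mul_eq hX hS hS01 hA hA01 hg hq hqX hμ11 hYI hμ11X ha haX hφ₁ hφ₁X,
    integral_S_mul_one_sub_A_mul_eq hX hS hS01 hA hA01 hg hq hqX hμ10 hYI hμ10X hb hbX hφ₂ hφ₂X]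
  · exact (((memLp_const 1).sub hSX).top_mul (hYX.top_mul hφ₀X)).integrable le_top
  · exact (hSX.top_mul (hAX.top_mul ((hYX.sub haX).top_mul hφ₁X))).integrable le_top
  · exact ((((memLp_const 1).sub hSX).top_mul (hYX.top_mul hφ₀X)).integrable le_top).add
      ((hSX.top_mul (hAX.top_mul ((hYX.sub haX).top_mul hφ₁X))).integrable le_top)
  · exact (hSX.top_mul (((memLp_const 1).sub hAX).top_mul
      ((hYX.sub hbX).top_mul hφ₂X))).integrable le_top

end Tower

/-- Here `a, b, c, t` stand for the candidates `μ̃₁₁, μ̃₁₀, μ̃₀₀, τ̃`. -/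
noncomputable def productRemainder (g μ11 μ10 m0 a b c t : ℝ) : ℝ :=
  g * (((1 - g) / g * (m0 / μ10) - t * (c / b)) * (a - μ11 + a / b * (μ10 - b)))

section ProductRemainder

variable {g q μ11 μ10 m0 a b c t : ℝ}

theorem productRemainder_eq (hg : g ≠ 0) (hq : q ≠ 0) (hq1 : 1 - q ≠ 0) (hb : b ≠ 0)
    (hμ10 : μ10 ≠ 0) :
    (1 - g) * (m0 * (a / b)) + g * (q * ((μ11 - a) * (t * (c / b) / q)))
      - g * ((1 - q) * ((μ10 - b) * (t * (c / b) * (a / b) / (1 - q))))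
      - (1 - g) * (m0 * (μ11 / μ10))
      = productRemainder g μ11 μ10 m0 a b c t := by
  unfold productRemainder
  field_simp
  ring

theorem abs_productRemainder_le {B : ℝ} (hB : 1 ≤ B) (hg : |g| ≤ 1) (hτ : |(1 - g) / g| ≤ B)
    (hab : |a / b| ≤ B) (hcb : |c / b| ≤ B) :
    |productRemainder g μ11 μ10 m0 a b c t|
      ≤ B ^ 2 * ((|a - μ11| + |b - μ10|) * (|c / b - m0 / μ10| + |t - (1 - g) / g|)) := by
  set τ := (1 - g) / g
  have hfirst : |τ * (m0 / μ10) - t * (c / b)| ≤ B * (|c / b - m0 / μ10| + |t - τ|) :=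
    calc |τ * (m0 / μ10) - t * (c / b)| = |τ * (m0 / μ10 - c / b) - (t - τ) * (c / b)| := by
          ring_nf
      _ ≤ |τ| * |m0 / μ10 - c / b| + |t - τ| * |c / b| := by
          rw [← abs_mul, ← abs_mul]
          exact abs_sub _ _
      _ ≤ B * (|c / b - m0 / μ10| + |t - τ|) := by
          rw [abs_sub_comm (m0 / μ10)]
          nlinarith [abs_nonneg (t - τ), abs_nonneg (c / b - m0 / μ10)]
  have hsecond : |a - μ11 + a / b * (μ10 - b)| ≤ B * (|a - μ11| + |b - μ10|) :=
    calc |a - μ11 + a / b * (μ10 - b)| ≤ |a - μ11| + |a / b| * |μ10 - b| := by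
          rw [← abs_mul]
          exact abs_add_le _ _
      _ ≤ B * (|a - μ11| + |b - μ10|) := by
          rw [abs_sub_comm μ10]
          nlinarith [abs_nonneg (a - μ11), abs_nonneg (b - μ10)]
  unfold productRemainder
  rw [abs_mul, abs_mul]
  calc |g| * (|τ * (m0 / μ10) - t * (c / b)| * |a - μ11 + a / b * (μ10 - b)|)
      ≤ 1 * (B * (|c / b - m0 / μ10| + |t - τ|) * (B * (|a - μ11| + |b - μ10|))) := by
        gcongr
    _ = B ^ 2 * ((|a - μ11| + |b - μ10|) * (|c / b - m0 / μ10| + |t - τ|)) := by ring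

end ProductRemainder

theorem H1_apply {Ω E : Type*} [MeasurableSpace Ω] {P : Measure Ω} {X : Ω → E}
    {S A Y : Ω → ℝ} {q a b c t : E → ℝ} (ω : Ω) :
    H1 P X S A Y q a b c t ω = (P {ω | S ω = 0}).toReal⁻¹ *
      ((1 - S ω) * (Y ω * (a (X ω) / b (X ω)))
        + S ω * (A ω * ((Y ω - a (X ω)) * (t (X ω) * (c (X ω) / b (X ω)) / q (X ω))))
        - S ω * ((1 - A ω) * ((Y ω - b (X ω)) *
            (t (X ω) * (c (X ω) / b (X ω)) * (a (X ω) / b (X ω)) / (1 - q (X ω)))))) := by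
  unfold H1
  ring

section BiasIdentity

variable {Ω E : Type*} [MeasurableSpace Ω] [MeasurableSpace E] {P : Measure Ω}
  [IsFiniteMeasure P] {X : Ω → E} {S A Y : Ω → ℝ} {μ11 μ10 m0 g q a b c t τ : E → ℝ}
  {ε M : ℝ}

theorem integral_H1_sub_condMean_eq (hX : Measurable X) (hS : Measurable S) (hA : Measurable A)
    (hY : Measurable Y) (hS01 : ∀ ω, S ω = 0 ∨ S ω = 1) (hA01 : ∀ ω, A ω = 0 ∨ A ω = 1)
    (hμ11 : IsVersion P X Y {ω | S ω = 1 ∧ A ω = 1} μ11)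
    (hμ10 : IsVersion P X Y {ω | S ω = 1 ∧ A ω = 0} μ10)
    (hm0 : IsVersion P X Y {ω | S ω = 0} m0) (hg : IsVersion P X S Set.univ g)
    (hq : IsVersion P X A {ω | S ω = 1} q) (hε : 0 < ε)
    (hgε : ∀ᵐ ω ∂P, ε ≤ g (X ω) ∧ g (X ω) ≤ 1 - ε)
    (hqε : ∀ᵐ ω ∂P, ε ≤ q (X ω) ∧ q (X ω) ≤ 1 - ε)
    (hYM : ∀ᵐ ω ∂P, |Y ω| ≤ M) (htruth : Admissible1 P X ε M μ11 μ10 m0 τ)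
    (hadm : Admissible1 P X ε M a b c t) :
    (∫ ω, H1 P X S A Y q a b c t ω ∂P)
        - condMean P (fun ω => μ11 (X ω) / μ10 (X ω) * Y ω) {ω | S ω = 0}
      = (P {ω | S ω = 0}).toReal⁻¹ * ∫ ω, productRemainder (g (X ω)) (μ11 (X ω)) (μ10 (X ω))
          (m0 (X ω)) (a (X ω)) (b (X ω)) (c (X ω)) (t (X ω)) ∂P := by
  obtain ⟨haX, hbX, hcX, htX, hbX'⟩ := hadm.memLp_top hX hε
  obtain ⟨hμ11X, hμ10X, hm0X, -, hμ10X'⟩ := htruth.memLp_top hX hε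
  have hYX : MemLp Y ∞ P := memLp_top_of_bound hY.aestronglyMeasurable M hYM
  obtain ⟨hgX, -, -⟩ := memLp_top_of_overlap hg.1 hX hε hgε
  obtain ⟨hqX, hqX', hq1X'⟩ := memLp_top_of_overlap hq.1 hX hε hqε
  have habX := haX.top_mul hbX'
  have hψ₁X := (htX.top_mul (hcX.top_mul hbX')).top_mul hqX'
  have hψ₂X := ((htX.top_mul (hcX.top_mul hbX')).top_mul habX).top_mul hq1X'
  have hμX := hμ11X.top_mul hμ10X'
  obtain ⟨ha, hb, hc, ht, hadmX⟩ := hadm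
  rw [integral_congr_ae (ae_of_all _ H1_apply), integral_const_mul,
    integral_projection_eq (φ₀ := fun x => a x / b x) (φ₁ := fun x => t x * (c x / b x) / q x)
      (φ₂ := fun x => t x * (c x / b x) * (a x / b x) / (1 - q x)) hX hS hS01 hA hA01 hμ11
      hμ10 hm0 hg hq hYX hμ11X hμ10X hm0X hgX hqX ha haX hb hbX (ha.div hb) habX
      ((ht.mul (hc.div hb)).div hq.1) hψ₁X
      (((ht.mul (hc.div hb)).mul (ha.div hb)).div (measurable_const.sub hq.1)) hψ₂X,
    condMean_mul_eq (φ := fun x => μ11 x / μ10 x) hX hS hS01 hg hgX hm0 hm0X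
      (hμ11.1.div hμ10.1) hμX, ← mul_sub]
  congr 1
  have h1gX := (memLp_const 1).sub hgX
  have i₁ := (h1gX.top_mul (hm0X.top_mul habX)).integrable le_top
  have i₂ := (hgX.top_mul (hqX.top_mul ((hμ11X.sub haX).top_mul hψ₁X))).integrable le_top
  have i₃ := (hgX.top_mul (((memLp_const 1).sub hqX).top_mul
    ((hμ10X.sub hbX).top_mul hψ₂X))).integrable le_top
  have i₄ := (h1gX.top_mul (hm0X.top_mul hμX)).integrable le_top
  rw [← integral_add, ← integral_sub, ← integral_sub]
  · refine integral_congr_ae ?_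
    filter_upwards [hgε, hqε, htruth.2.2.2.2, hadmX] with ω hgω hqω htrω hadmω
    exact productRemainder_eq (by linarith [hgω.1]) (by linarith [hqω.1]) (by linarith [hqω.2])
      (abs_pos.1 (hε.trans_le hadmω.1)) (abs_pos.1 (hε.trans_le htrω.1))
  · exact (i₁.add i₂).sub i₃
  · exact i₄
  · exact i₁.add i₂
  · exact i₃
  · exact i₁
  · exact i₂

end BiasIdentity

section CauchySchwarz

variable {Ω E : Type*} [MeasurableSpace Ω] {P : Measure Ω} {X : Ω → E}

theorem integral_abs_mul_le_normX_mul {u v : E → ℝ} (hu : MemLp (fun ω => u (X ω)) 2 P)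
    (hv : MemLp (fun ω => v (X ω)) 2 P) :
    ∫ ω, |u (X ω)| * |v (X ω)| ∂P ≤ normX P X u * normX P X v := by
  have hsq (x : ℝ) : ‖x‖ ^ (2 : ℝ) = x ^ 2 := by
    rw [Real.rpow_two, Real.norm_eq_abs, sq_abs]
  have hHolder := integral_mul_norm_le_Lp_mul_Lq (μ := P) Real.HolderConjugate.two_two
    (by simpa using hu) (by simpa using hv)
  simp only [hsq] at hHolder
  simpa only [normX, Real.sqrt_eq_rpow, Real.norm_eq_abs] using hHolder

theorem abs_integral_le_mul_normX_add_mul_normX_add {F : Ω → ℝ} {K : ℝ} {u₁ u₂ v₁ v₂ : E → ℝ}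
    (hK : 0 ≤ K) (hu₁ : MemLp (fun ω => u₁ (X ω)) 2 P) (hu₂ : MemLp (fun ω => u₂ (X ω)) 2 P)
    (hv₁ : MemLp (fun ω => v₁ (X ω)) 2 P) (hv₂ : MemLp (fun ω => v₂ (X ω)) 2 P)
    (hF : ∀ᵐ ω ∂P,
      |F ω| ≤ K * ((|u₁ (X ω)| + |u₂ (X ω)|) * (|v₁ (X ω)| + |v₂ (X ω)|))) :
    |∫ ω, F ω ∂P|
      ≤ K * (normX P X u₁ + normX P X u₂) * (normX P X v₁ + normX P X v₂) := by
  have hint {u v : E → ℝ} (hu : MemLp (fun ω => u (X ω)) 2 P)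
      (hv : MemLp (fun ω => v (X ω)) 2 P) :
      Integrable (fun ω => |u (X ω)| * |v (X ω)|) P :=
    hu.norm.integrable_mul hv.norm
  calc |∫ ω, F ω ∂P| ≤ ∫ ω, |F ω| ∂P := abs_integral_le_integral_abs
    _ ≤ ∫ ω, K * ((|u₁ (X ω)| * |v₁ (X ω)| + |u₁ (X ω)| * |v₂ (X ω)|)
          + (|u₂ (X ω)| * |v₁ (X ω)| + |u₂ (X ω)| * |v₂ (X ω)|)) ∂P := by
        refine integral_mono_of_nonneg (ae_of_all _ fun ω => abs_nonneg _)
          ((((hint hu₁ hv₁).add (hint hu₁ hv₂)).add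
            ((hint hu₂ hv₁).add (hint hu₂ hv₂))).const_mul K) ?_
        filter_upwards [hF] with ω hω
        linarith
    _ = K * ((∫ ω, |u₁ (X ω)| * |v₁ (X ω)| ∂P + ∫ ω, |u₁ (X ω)| * |v₂ (X ω)| ∂P)
          + (∫ ω, |u₂ (X ω)| * |v₁ (X ω)| ∂P + ∫ ω, |u₂ (X ω)| * |v₂ (X ω)| ∂P)) := by
        rw [integral_const_mul, integral_add ?_ ?_, integral_add (hint hu₁ hv₁) (hint hu₁ hv₂),
          integral_add (hint hu₂ hv₁) (hint hu₂ hv₂)]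
        · exact (hint hu₁ hv₁).add (hint hu₁ hv₂)
        · exact (hint hu₂ hv₁).add (hint hu₂ hv₂)
    _ ≤ K * ((normX P X u₁ * normX P X v₁ + normX P X u₁ * normX P X v₂)
          + (normX P X u₂ * normX P X v₁ + normX P X u₂ * normX P X v₂)) := by
        gcongr <;> exact integral_abs_mul_le_normX_mul ‹_› ‹_›
    _ = K * (normX P X u₁ + normX P X u₂) * (normX P X v₁ + normX P X v₂) := by ring

end CauchySchwarz

theorem H1_alternative_product_bias_bound_general
    {Ω E : Type*} [MeasurableSpace Ω] [MeasurableSpace E]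
    (P : Measure Ω) [IsProbabilityMeasure P]
    (X : Ω → E) (S A Y : Ω → ℝ)
    (hX : Measurable X) (hS : Measurable S) (hA : Measurable A) (hY : Measurable Y)
    (hS01 : ∀ ω, S ω = 0 ∨ S ω = 1) (hA01 : ∀ ω, A ω = 0 ∨ A ω = 1)
    (μ11 μ10 m0 g q : E → ℝ)
    (hμ11 : IsVersion P X Y {ω | S ω = 1 ∧ A ω = 1} μ11)
    (hμ10 : IsVersion P X Y {ω | S ω = 1 ∧ A ω = 0} μ10)
    (hm0 : IsVersion P X Y {ω | S ω = 0} m0)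
    (hg : IsVersion P X S Set.univ g)
    (hq : IsVersion P X A {ω | S ω = 1} q)
    (ε M : ℝ) (hε0 : 0 < ε) (hε1 : ε < 1) (hM : 1 ≤ M)
    (hbd : ∀ᵐ ω ∂P,
      ε ≤ g (X ω) ∧ g (X ω) ≤ 1 - ε ∧ ε ≤ q (X ω) ∧ q (X ω) ≤ 1 - ε ∧
      ε ≤ |μ10 (X ω)| ∧ |μ11 (X ω)| ≤ M ∧ |μ10 (X ω)| ≤ M ∧ |m0 (X ω)| ≤ M ∧
      |Y ω| ≤ M ∧ (1 - g (X ω)) / g (X ω) ≤ M)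
    (htruth : Admissible1 P X ε M μ11 μ10 m0 (fun x => (1 - g x) / g x))
    :
    ∃ C : ℝ, ∀ m11 m10 m00 t : E → ℝ, Admissible1 P X ε M m11 m10 m00 t →
      |(∫ ω, H1 P X S A Y q m11 m10 m00 t ω ∂P) -
          condMean P (fun ω => μ11 (X ω) / μ10 (X ω) * Y ω) {ω | S ω = 0}|
        ≤ C * (normX P X (fun x => m11 x - μ11 x) +
              normX P X (fun x => m10 x - μ10 x)) *
            (normX P X (fun x => m00 x / m10 x - m0 x / μ10 x) +
              normX P X (fun x => t x - (1 - g x) / g x)) := by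
  have hMε : M ≤ M / ε := le_div_self (by linarith) hε0 hε1.le
  have hκ : 0 ≤ (P {ω | S ω = 0}).toReal⁻¹ := by positivity
  refine ⟨(P {ω | S ω = 0}).toReal⁻¹ * (M / ε) ^ 2, fun a b c t hadm => ?_⟩
  rw [integral_H1_sub_condMean_eq hX hS hA hY hS01 hA01 hμ11 hμ10 hm0 hg hq hε0
    (hbd.mono fun ω h => ⟨h.1, h.2.1⟩) (hbd.mono fun ω h => ⟨h.2.2.1, h.2.2.2.1⟩)
    (hbd.mono fun ω h => h.2.2.2.2.2.2.2.2.1) htruth hadm, ← integral_const_mul]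
  obtain ⟨haX, hbX, hcX, htX, hbX'⟩ := hadm.memLp_top hX hε0
  obtain ⟨hμ11X, hμ10X, hm0X, hτX, hμ10X'⟩ := htruth.memLp_top hX hε0
  refine abs_integral_le_mul_normX_add_mul_normX_add (by positivity)
    ((haX.sub hμ11X).mono_exponent le_top) ((hbX.sub hμ10X).mono_exponent le_top)
    (((hcX.top_mul hbX').sub (hm0X.top_mul hμ10X')).mono_exponent le_top)
    ((htX.sub hτX).mono_exponent le_top) ?_
  filter_upwards [hbd, htruth.2.2.2.2, hadm.2.2.2.2] with ω hω htrω hadmω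
  have hM0 : 0 ≤ M := by linarith
  rw [abs_mul, abs_of_nonneg hκ, mul_assoc]
  refine mul_le_mul_of_nonneg_left (abs_productRemainder_le (hM.trans hMε)
    (abs_le.2 ⟨by linarith [hω.1], by linarith [hω.2.1]⟩)
    ((abs_of_nonneg htrω.2.2.2.2.1).trans_le (htrω.2.2.2.2.2.trans hMε)) ?_ ?_) hκ <;>
  rw [abs_div]
  · exact div_le_div₀ hM0 hadmω.2.1 hε0 hadmω.1
  · exact div_le_div₀ hM0 hadmω.2.2.2.1 hε0 hadmω.1

/-- Alternative product-form bias bound (Section 2.4, alternative representation of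
`R₁,ₙ`): there is a constant `C`, depending only on `ε`, `M` and `P(S=0)`, such that
for all admissible nuisance candidates,
`|E[H₁(μ̃₁₁,μ̃₁₀,μ̃₀₀,τ̃)] − α₁| ≤ C·(‖μ̃₁₁ − μ₁₁‖ + ‖μ̃₁₀ − μ₁₀‖)·(‖μ̃₀₀/μ̃₁₀ − m₀/μ₁₀‖ + ‖τ̃ − τ‖)`. -/
theorem H1_alternative_product_bias_bound
    {Ω E : Type*} [MeasurableSpace Ω] [MeasurableSpace E]
    (P : Measure Ω) [IsProbabilityMeasure P]
    (X : Ω → E) (S A Y : Ω → ℝ)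
    (hX : Measurable X) (hS : Measurable S) (hA : Measurable A) (hY : Measurable Y)
    (hS01 : ∀ ω, S ω = 0 ∨ S ω = 1) (hA01 : ∀ ω, A ω = 0 ∨ A ω = 1)
    (hPS0 : 0 < P {ω | S ω = 0})
    (hPS1A1 : 0 < P {ω | S ω = 1 ∧ A ω = 1})
    (hPS1A0 : 0 < P {ω | S ω = 1 ∧ A ω = 0})
    (μ11 μ10 m0 g q : E → ℝ)
    (hμ11 : IsVersion P X Y {ω | S ω = 1 ∧ A ω = 1} μ11)
    (hμ10 : IsVersion P X Y {ω | S ω = 1 ∧ A ω = 0} μ10)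
    (hm0 : IsVersion P X Y {ω | S ω = 0} m0)
    (hg : IsVersion P X S Set.univ g)
    (hq : IsVersion P X A {ω | S ω = 1} q)
    (ε M : ℝ) (hε0 : 0 < ε) (hε1 : ε < 1) (hM : 1 ≤ M)
    (hbd : ∀ᵐ ω ∂P,
      ε ≤ g (X ω) ∧ g (X ω) ≤ 1 - ε ∧ ε ≤ q (X ω) ∧ q (X ω) ≤ 1 - ε ∧
      ε ≤ |μ10 (X ω)| ∧ |μ11 (X ω)| ≤ M ∧ |μ10 (X ω)| ≤ M ∧ |m0 (X ω)| ≤ M ∧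
      |Y ω| ≤ M ∧ (1 - g (X ω)) / g (X ω) ≤ M)
    (htruth : Admissible1 P X ε M μ11 μ10 m0 (fun x => (1 - g x) / g x))
    :
    ∃ C : ℝ, ∀ m11 m10 m00 t : E → ℝ, Admissible1 P X ε M m11 m10 m00 t →
      |(∫ ω, H1 P X S A Y q m11 m10 m00 t ω ∂P) -
          condMean P (fun ω => μ11 (X ω) / μ10 (X ω) * Y ω) {ω | S ω = 0}|
        ≤ C * (normX P X (fun x => m11 x - μ11 x) +
              normX P X (fun x => m10 x - μ10 x)) *
            (normX P X (fun x => m00 x / m10 x - m0 x / μ10 x) +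
              normX P X (fun x => t x - (1 - g x) / g x)) :=
  H1_alternative_product_bias_bound_general P X S A Y hX hS hA hY hS01 hA01 μ11 μ10 m0 g q hμ11 hμ10
    hm0 hg hq ε M hε0 hε1 hM hbd htruth
end
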